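/- Let P = (J, R, e, q) be a presentation for a symmetric operad A. If for each n ≥ 0 the functions e_n, q_n : r⁻¹(n) → S_n × J^∞[n] are of the form ⟨0, f_n⟩ and ⟨0, g_n⟩ respectively, where 0 denotes the constant function at the identity element of S_n and f_n, g_n : r⁻¹(n) → J^∞[n], then A is isomorphic to the symmetrisation of a plain operad. -/

import Mathlib

universe u

/-- The canonical (order-preserving) equivalence between a sigma type of `Fin`s
and `Fin` of the sum: it realises the "standard" concatenation order. -/
noncomputable def finSigma {m : ℕ} (k : Fin m → ℕ) :
    (Σ i, Fin (k i)) ≃ Fin (∑ i, k i) :=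
  letI : Fintype (Σₗ i, Fin (k i)) := inferInstanceAs (Fintype (Σ i, Fin (k i)))
  (toLex : (Σ i, Fin (k i)) ≃ (Σₗ i, Fin (k i))).trans
    (Fintype.orderIsoFinOfCardEq (Σₗ i, Fin (k i))
      (by exact (Fintype.card_congr (toLex : (Σ i, Fin (k i)) ≃ (Σₗ i, Fin (k i)))).symm.trans (by simp))).symm.toEquiv

/-- The block-sum permutation `t₁ ⊕ ⋯ ⊕ t_m` of `Fin (∑ i, k i)`. -/
noncomputable def blockSumPerm {m : ℕ} (k : Fin m → ℕ)
    (t : ∀ i, Equiv.Perm (Fin (k i))) : Equiv.Perm (Fin (∑ i, k i)) :=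
  ((finSigma k).symm.trans (Equiv.sigmaCongrRight t)).trans (finSigma k)

/-- The block permutation of `Fin (∑ i, k i)` induced by a permutation `t` of the blocks. -/
noncomputable def blockPerm {m : ℕ} (k : Fin m → ℕ) (t : Equiv.Perm (Fin m)) :
    Equiv.Perm (Fin (∑ i, k i)) :=
  ((finCongr (Equiv.sum_comp t k)).symm.trans
    ((finSigma fun i => k (t i)).symm.trans
      ((Equiv.sigmaCongrLeft (β := fun i => Fin (k i)) t).trans (finSigma k))))

/-- A plain (non-symmetric) operad: a monoid in strongly analytic endofunctors of `Set`,
presented concretely by a family of sets of operations indexed by arity, an identity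
operation, and composition, satisfying associativity and unit laws. -/
structure PlainOperad : Type (u + 1) where
  ops : ℕ → Type u
  unit : ops 1
  comp : ∀ {m : ℕ}, ops m → ∀ k : Fin m → ℕ, (∀ i, ops (k i)) → ops (∑ i, k i)
  comp_unit : ∀ {m : ℕ} (ρ : ops m), HEq (comp ρ (fun _ => 1) fun _ => unit) ρ
  unit_comp : ∀ {n : ℕ} (ρ : ops n), HEq (comp unit (fun _ => n) fun _ => ρ) ρ
  comp_assoc : ∀ {m : ℕ} (ρ : ops m) (k : Fin m → ℕ) (f : ∀ i, ops (k i))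
      (l : (Σ i : Fin m, Fin (k i)) → ℕ) (g : ∀ p, ops (l p)),
      HEq (comp (comp ρ k f) (fun j => l ((finSigma k).symm j))
            (fun j => g ((finSigma k).symm j)))
          (comp ρ (fun i => ∑ j : Fin (k i), l ⟨i, j⟩)
            (fun i => comp (f i) (fun j => l ⟨i, j⟩) (fun j => g ⟨i, j⟩)))

/-- A symmetric operad: a monoid in analytic endofunctors of `Set`, presented concretely:
a plain operad structure together with symmetric group actions satisfying the two
equivariance axioms. -/
structure SymmetricOperad : Type (u + 1) where
  ops : ℕ → Type u
  unit : ops 1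
  comp : ∀ {m : ℕ}, ops m → ∀ k : Fin m → ℕ, (∀ i, ops (k i)) → ops (∑ i, k i)
  act : ∀ {n : ℕ}, Equiv.Perm (Fin n) → ops n → ops n
  act_one : ∀ {n : ℕ} (ρ : ops n), act 1 ρ = ρ
  act_mul : ∀ {n : ℕ} (s t : Equiv.Perm (Fin n)) (ρ : ops n),
      act (s * t) ρ = act s (act t ρ)
  comp_unit : ∀ {m : ℕ} (ρ : ops m), HEq (comp ρ (fun _ => 1) fun _ => unit) ρ
  unit_comp : ∀ {n : ℕ} (ρ : ops n), HEq (comp unit (fun _ => n) fun _ => ρ) ρ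
  comp_assoc : ∀ {m : ℕ} (ρ : ops m) (k : Fin m → ℕ) (f : ∀ i, ops (k i))
      (l : (Σ i : Fin m, Fin (k i)) → ℕ) (g : ∀ p, ops (l p)),
      HEq (comp (comp ρ k f) (fun j => l ((finSigma k).symm j))
            (fun j => g ((finSigma k).symm j)))
          (comp ρ (fun i => ∑ j : Fin (k i), l ⟨i, j⟩)
            (fun i => comp (f i) (fun j => l ⟨i, j⟩) (fun j => g ⟨i, j⟩)))
  act_comp : ∀ {m : ℕ} (ρ : ops m) (k : Fin m → ℕ) (f : ∀ i, ops (k i))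
      (t : ∀ i, Equiv.Perm (Fin (k i))),
      comp ρ k (fun i => act (t i) (f i)) = act (blockSumPerm k t) (comp ρ k f)
  comp_act : ∀ {m : ℕ} (t : Equiv.Perm (Fin m)) (ρ : ops m) (k : Fin m → ℕ)
      (f : ∀ i, ops (k i)),
      HEq (comp (act t ρ) (fun i => k (t i)) (fun i => f (t i)))
          (act (blockPerm k t) (comp ρ k f))

/-- Forget the symmetric group actions of a symmetric operad. -/
def SymmetricOperad.toPlain (A : SymmetricOperad.{u}) : PlainOperad.{u} where
  ops := A.ops
  unit := A.unit
  comp := A.comp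
  comp_unit := A.comp_unit
  unit_comp := A.unit_comp
  comp_assoc := A.comp_assoc

/-- Morphisms of plain operads. -/
structure PlainOperad.Hom (P Q : PlainOperad.{u}) : Type u where
  app : ∀ n, P.ops n → Q.ops n
  app_unit : app 1 P.unit = Q.unit
  app_comp : ∀ {m : ℕ} (ρ : P.ops m) (k : Fin m → ℕ) (f : ∀ i, P.ops (k i)),
      app _ (P.comp ρ k f) = Q.comp (app m ρ) k fun i => app _ (f i)

/-- Morphisms of symmetric operads. -/
structure SymmetricOperad.Hom (A B : SymmetricOperad.{u}) : Type u where
  app : ∀ n, A.ops n → B.ops n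
  app_unit : app 1 A.unit = B.unit
  app_comp : ∀ {m : ℕ} (ρ : A.ops m) (k : Fin m → ℕ) (f : ∀ i, A.ops (k i)),
      app _ (A.comp ρ k f) = B.comp (app m ρ) k fun i => app _ (f i)
  app_act : ∀ {n : ℕ} (t : Equiv.Perm (Fin n)) (ρ : A.ops n),
      app n (A.act t ρ) = B.act t (app n ρ)

/-- `A` is (isomorphic to) the symmetrisation of the plain operad `P`: the universal
property of the left adjoint of the forgetful functor `SymmOp ⥤ PlainOp`. -/
def IsSymmetrisation (A : SymmetricOperad.{u}) (P : PlainOperad.{u}) : Prop :=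
  ∃ ι : P.Hom A.toPlain, ∀ (B : SymmetricOperad.{u}) (g : P.Hom B.toPlain),
    ∃! h : A.Hom B, ∀ (n : ℕ) (ρ : P.ops n), h.app n (ι.app n ρ) = g.app n ρ

/-- The free plain operad on a collection `ar : J → ℕ`: planar trees with
nodes labelled by elements of `J`. -/
inductive FreePlain (J : Type u) (ar : J → ℕ) : ℕ → Type u
  | leaf : FreePlain J ar 1
  | node (x : J) (k : Fin (ar x) → ℕ) (c : ∀ i, FreePlain J ar (k i)) :
      FreePlain J ar (∑ i, k i)

namespace FreePlain

variable {J : Type u} {ar : J → ℕ}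

/-- Transport a tree along an equality of arities. -/
def cast {m n : ℕ} (h : m = n) (t : FreePlain J ar m) : FreePlain J ar n := h ▸ t

/-- Interpret a free-operad element (a tree) in a plain operad, given an
interpretation of the generators. -/
def eval (P : PlainOperad.{u}) (ι : ∀ x : J, P.ops (ar x)) :
    ∀ {n : ℕ}, FreePlain J ar n → P.ops n
  | _, .leaf => P.unit
  | _, .node x k c => P.comp (ι x) k fun i => eval P ι (c i)

/-- A generator, as a tree of height one. -/
def of (x : J) : FreePlain J ar (ar x) :=
  cast (by simp) (node x (fun _ => 1) fun _ => leaf)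

/-- A nullary generator, as a tree. -/
def of0 (x : J) (h : ar x = 0) : FreePlain J ar 0 :=
  cast (h ▸ rfl : ar x = 0) (of x)

/-- Pairing for dependent functions out of `Fin 2`. -/
def pairFun {α : Fin 2 → Sort*} (a : α 0) (b : α 1) : ∀ i, α i
  | ⟨0, _⟩ => a
  | ⟨1, _⟩ => b

/-- A binary generator applied to two trees. -/
def of2 (x : J) (h : ar x = 2) {p q : ℕ}
    (a : FreePlain J ar p) (b : FreePlain J ar q) : FreePlain J ar (p + q) :=
  cast (by
      have e : ∑ i : Fin (ar x), ![p, q] (Fin.cast h i) = ∑ j : Fin 2, ![p, q] j :=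
        Fintype.sum_equiv (finCongr h) _ _ fun i => rfl
      rw [e]; simp [Fin.sum_univ_two])
    (node x (fun i => ![p, q] (Fin.cast h i))
      (fun i => pairFun (α := fun j : Fin 2 => FreePlain J ar (![p, q] j)) a b (Fin.cast h i)))

end FreePlain

/-- A presentation for a symmetric operad: generators `J` with arities `ar`, and
relations indexed by `R`, each being a parallel pair of elements of the underlying
collection `Σ n, Sₙ × J^∞[n]` of the free symmetric operad on `(J, ar)`. -/
structure SymmPresentation (J : Type u) (ar : J → ℕ) : Type (u + 1) where
  R : Type u
  relN : R → ℕ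
  lhsPerm : ∀ r, Equiv.Perm (Fin (relN r))
  lhsTree : ∀ r, FreePlain J ar (relN r)
  rhsPerm : ∀ r, Equiv.Perm (Fin (relN r))
  rhsTree : ∀ r, FreePlain J ar (relN r)

/-- A symmetric operad `A`, with an interpretation `ι` of the generators, satisfies a
presentation if the two sides of every relation become equal in `A`. -/
def SymmetricOperad.Satisfies (A : SymmetricOperad.{u}) {J : Type u} {ar : J → ℕ}
    (ι : ∀ x : J, A.ops (ar x)) (P : SymmPresentation J ar) : Prop :=
  ∀ r : P.R, A.act (P.lhsPerm r) ((P.lhsTree r).eval A.toPlain ι)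
    = A.act (P.rhsPerm r) ((P.rhsTree r).eval A.toPlain ι)

/-- `A` is presented by `P` (via the interpretation `ι` of generators): `A` satisfies the
relations, and it is universal with that property; this is the universal property of the
coequaliser `F(R) ⇉ F(J) → A` in the category of symmetric operads. -/
def SymmetricOperad.IsPresentedBy (A : SymmetricOperad.{u}) {J : Type u} {ar : J → ℕ}
    (ι : ∀ x : J, A.ops (ar x)) (P : SymmPresentation J ar) : Prop :=
  A.Satisfies ι P ∧
    ∀ (B : SymmetricOperad.{u}) (κ : ∀ x : J, B.ops (ar x)), B.Satisfies κ P →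
      ∃! h : A.Hom B, ∀ x : J, h.app _ (ι x) = κ x

/-- `A` is the free symmetric operad on the collection `(J, ar)`, via `ι`. -/
def SymmetricOperad.IsFreeOn (A : SymmetricOperad.{u}) {J : Type u} {ar : J → ℕ}
    (ι : ∀ x : J, A.ops (ar x)) : Prop :=
  ∀ (B : SymmetricOperad.{u}) (κ : ∀ x : J, B.ops (ar x)),
    ∃! h : A.Hom B, ∀ x : J, h.app _ (ι x) = κ x

/-- `P` is the free plain operad on the collection `(J, ar)`, via `ι`. -/
def PlainOperad.IsFreeOn (P : PlainOperad.{u}) {J : Type u} {ar : J → ℕ}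
    (ι : ∀ x : J, P.ops (ar x)) : Prop :=
  ∀ (Q : PlainOperad.{u}) (κ : ∀ x : J, Q.ops (ar x)),
    ∃! h : P.Hom Q, ∀ x : J, h.app _ (ι x) = κ x

/-- An algebra for a symmetric operad on a set `X`. -/
structure SymmetricOperad.Algebra (A : SymmetricOperad.{u}) (X : Type u) : Type u where
  run : ∀ n, A.ops n → (Fin n → X) → X
  run_unit : ∀ x : X, run 1 A.unit (fun _ => x) = x
  run_comp : ∀ {m : ℕ} (ρ : A.ops m) (k : Fin m → ℕ) (f : ∀ i, A.ops (k i))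
      (xs : Fin (∑ i, k i) → X),
      run _ (A.comp ρ k f) xs
        = run m ρ fun i => run (k i) (f i) fun j => xs (finSigma k ⟨i, j⟩)
  run_act : ∀ {n : ℕ} (t : Equiv.Perm (Fin n)) (ρ : A.ops n) (xs : Fin n → X),
      run n (A.act t ρ) xs = run n ρ fun i => xs (t.symm i)

/-- An algebra for a plain operad on a set `X`. -/
structure PlainOperad.Algebra (P : PlainOperad.{u}) (X : Type u) : Type u where
  run : ∀ n, P.ops n → (Fin n → X) → X
  run_unit : ∀ x : X, run 1 P.unit (fun _ => x) = x
  run_comp : ∀ {m : ℕ} (ρ : P.ops m) (k : Fin m → ℕ) (f : ∀ i, P.ops (k i))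
      (xs : Fin (∑ i, k i) → X),
      run _ (P.comp ρ k f) xs
        = run m ρ fun i => run (k i) (f i) fun j => xs (finSigma k ⟨i, j⟩)

/-- The underlying object of the monad on `Set` associated to a symmetric operad:
`A(X) = Σ_{n≥0} Xⁿ ×_{Sₙ} A[n]`. -/
def SymmetricOperad.MonadObj (A : SymmetricOperad.{u}) (X : Type u) : Type u :=
  Σ n : ℕ, Quot (fun p q : A.ops n × (Fin n → X) =>
    ∃ t : Equiv.Perm (Fin n), q.1 = A.act t p.1 ∧ q.2 = fun i => p.2 (t.symm i))

/-- The sub-plain-operad of `A` generated by the interpretation `ι` of generators. -/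
inductive Gen {J : Type u} {ar : J → ℕ} (A : SymmetricOperad.{u})
    (ι : ∀ x : J, A.ops (ar x)) : ∀ n, A.ops n → Prop
  | unit : Gen A ι 1 A.unit
  | of (x : J) : Gen A ι (ar x) (ι x)
  | comp {m : ℕ} {ρ : A.ops m} (k : Fin m → ℕ) {f : ∀ i, A.ops (k i)} :
      Gen A ι m ρ → (∀ i, Gen A ι (k i) (f i)) → Gen A ι _ (A.comp ρ k f)

theorem sub_heq {A : SymmetricOperad.{u}} {p : ∀ n, A.ops n → Prop} {m n : ℕ}
    (h : m = n) {a : A.ops m} {b : A.ops n} (hab : HEq a b) (ha : p m a) (hb : p n b) :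
    HEq (⟨a, ha⟩ : {x // p m x}) (⟨b, hb⟩ : {x // p n x}) := by
  subst h; cases hab; rfl

/-- The plain operad structure on the image of the generators inside `A`. -/
def genOperad {J : Type u} {ar : J → ℕ} (A : SymmetricOperad.{u})
    (ι : ∀ x : J, A.ops (ar x)) : PlainOperad.{u} where
  ops n := {a : A.ops n // Gen A ι n a}
  unit := ⟨A.unit, .unit⟩
  comp ρ k f := ⟨A.comp ρ.1 k fun i => (f i).1, .comp k ρ.2 fun i => (f i).2⟩
  comp_unit ρ := sub_heq (by simp) (A.comp_unit ρ.1) _ _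
  unit_comp ρ := sub_heq (by simp) (A.unit_comp ρ.1) _ _
  comp_assoc ρ k f l g := by
    refine sub_heq ?_ (A.comp_assoc ρ.1 k (fun i => (f i).1) l (fun p => (g p).1)) _ _
    rw [Equiv.sum_comp (finSigma k).symm l]
    exact Finset.sum_sigma _ _ _

theorem gen_eval {J : Type u} {ar : J → ℕ} (A : SymmetricOperad.{u})
    (ι : ∀ x : J, A.ops (ar x)) : ∀ {n : ℕ} (t : FreePlain J ar n),
    Gen A ι n (t.eval A.toPlain ι)
  | _, .leaf => .unit
  | _, .node x k c => .comp k (.of x) fun i => gen_eval A ι (c i)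

theorem eval_g {J : Type u} {ar : J → ℕ} {A : SymmetricOperad.{u}}
    {ι : ∀ x : J, A.ops (ar x)} {B : SymmetricOperad.{u}}
    (g : (genOperad A ι).Hom B.toPlain) :
    ∀ {n : ℕ} (t : FreePlain J ar n),
      t.eval B.toPlain (fun x => g.app _ ⟨ι x, .of x⟩)
        = g.app n ⟨t.eval A.toPlain ι, gen_eval A ι t⟩
  | _, .leaf => g.app_unit.symm
  | _, .node x k c => by
      show B.comp _ k _ = _
      rw [show (⟨(FreePlain.node x k c).eval A.toPlain ι, _⟩ :
            (genOperad A ι).ops _)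
          = (genOperad A ι).comp ⟨ι x, .of x⟩ k
              (fun i => ⟨(c i).eval A.toPlain ι, gen_eval A ι (c i)⟩) from rfl]
      refine Eq.trans ?_ (g.app_comp _ _ _).symm
      exact congrArg _ (funext fun i => eval_g g (c i))

/-- **Statement 5.** If `A` is a symmetric operad presented by a presentation all of whose
relations carry the identity permutation (i.e. both sides of each relation are of the form
`(0, tree)`), then `A` is isomorphic to the symmetrisation of a plain operad. -/
theorem presented_without_permutations_is_symmetrisation_of_plain
    {J : Type u} {ar : J → ℕ} (P : SymmPresentation J ar)
    (A : SymmetricOperad.{u}) (ι : ∀ x : J, A.ops (ar x))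
    (hA : A.IsPresentedBy ι P)
    (hl : ∀ r : P.R, P.lhsPerm r = 1) (hr : ∀ r : P.R, P.rhsPerm r = 1) :
    ∃ Q : PlainOperad.{u}, IsSymmetrisation A Q := by
  refine ⟨genOperad A ι, ⟨⟨fun n => Subtype.val, rfl, fun ρ k f => rfl⟩, ?_⟩⟩
  intro B g
  have hsat : ∀ r : P.R, (P.lhsTree r).eval A.toPlain ι
      = (P.rhsTree r).eval A.toPlain ι := by
    intro r
    have := hA.1 r
    rw [hl r, hr r] at this
    exact (A.act_one _).symm.trans (this.trans (A.act_one _))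
  set κ : ∀ x : J, B.ops (ar x) := fun x => g.app _ ⟨ι x, .of x⟩ with hκ
  have hBsat : B.Satisfies κ P := by
    intro r
    rw [hl r, hr r]
    refine (B.act_one _).trans (Eq.trans ?_ (B.act_one _).symm)
    refine (eval_g g _).trans (Eq.trans ?_ (eval_g g _).symm)
    exact congrArg _ (Subtype.ext (hsat r))
  obtain ⟨h, hh, huniq⟩ := hA.2 B κ hBsat
  refine ⟨h, ?_, ?_⟩
  · intro n ρ
    obtain ⟨a, pa⟩ := ρ
    induction pa with
    | unit => exact h.app_unit.trans g.app_unit.symm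
    | of x => exact hh x
    | comp k hρ hf ihρ ihf =>
        rw [h.app_comp]
        rw [show (⟨_, Gen.comp k hρ hf⟩ : (genOperad A ι).ops _)
            = (genOperad A ι).comp ⟨_, hρ⟩ _ (fun i => ⟨_, hf i⟩) from rfl]
        refine Eq.trans ?_ (g.app_comp _ _ _).symm
        rw [ihρ]
        exact congrArg _ (funext fun i => ihf i)
  · intro h' hh'
    exact huniq h' fun x => hh' _ ⟨ι x, .of x⟩
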